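/- For a p/t-net, distinct transitions a, b ∈ T, and k ∈ ℕ, the set X = E_a ∩ E_b ∩ (complement of E_{a(k)b}) of markings is order-convex: for all markings M, M', M'' with M ≤ M' ≤ M'' componentwise, if M ∈ X and M'' ∈ X then M' ∈ X. Here E_a (resp. E_b) is the set of markings enabling a (resp. b), and E_{a(k)b} = {M | there exists w ∈ T* with |w| ≤ k and the string awb enabled in M}. -/

import Mathlib

open Classical in
/-- The marking obtained by firing transition `a` in marking `M`:
tokens are removed from entries of `a` and added to exits of `a`. -/
noncomputable def fire {P T : Type} (Fpt : P → T → Prop) (Ftp : T → P → Prop)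
    (M : P → ℕ) (a : T) : P → ℕ :=
  fun p => M p - (if Fpt p a then 1 else 0) + (if Ftp a p then 1 else 0)

/-- Transition `a` is enabled in marking `M` (all its entries are marked). -/
def Enabled {P T : Type} (Fpt : P → T → Prop) (M : P → ℕ) (a : T) : Prop :=
  ∀ p, Fpt p a → 1 ≤ M p

/-- `Fires Fpt Ftp M w M'` means the string `w` is enabled in `M` and its
execution leads from `M` to `M'` (the predicate `M w M'`). -/
inductive Fires {P T : Type} (Fpt : P → T → Prop) (Ftp : T → P → Prop) :
    (P → ℕ) → List T → (P → ℕ) → Prop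
  | nil (M : P → ℕ) : Fires Fpt Ftp M [] M
  | cons {M M'' : P → ℕ} {a : T} {w : List T} :
      Enabled Fpt M a → Fires Fpt Ftp (fire Fpt Ftp M a) w M'' →
      Fires Fpt Ftp M (a :: w) M''

/-- The string `w` is enabled in marking `M` (the predicate `M w`). -/
def EnabledSeq {P T : Type} (Fpt : P → T → Prop) (Ftp : T → P → Prop)
    (M : P → ℕ) (w : List T) : Prop :=
  ∃ M', Fires Fpt Ftp M w M'

/-- `M` is reachable from the initial marking `M0`. -/
def Reachable {P T : Type} (Fpt : P → T → Prop) (Ftp : T → P → Prop)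
    (M0 M : P → ℕ) : Prop :=
  ∃ w : List T, Fires Fpt Ftp M0 w M

/-! Firing is monotone in the marking: extra tokens never disable a transition and are carried
along unchanged. So `E_a`, `E_b` and `E_{a(k)b}` are upward closed, and the intersection of an
upward closed set with the complement of another one is order-convex. -/

section Monotonicity

variable {P T : Type} {Fpt : P → T → Prop} {Ftp : T → P → Prop}

theorem Enabled.mono {M N : P → ℕ} {a : T} (h : Enabled Fpt M a) (hle : M ≤ N) :
    Enabled Fpt N a :=
  fun p hp => (h p hp).trans (hle p)

theorem fire_mono {M N : P → ℕ} (hle : M ≤ N) (a : T) :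
    fire Fpt Ftp M a ≤ fire Fpt Ftp N a := by
  intro p
  unfold fire
  have := hle p
  gcongr

theorem Fires.mono {M N M' : P → ℕ} {w : List T} (h : Fires Fpt Ftp M w M') (hle : M ≤ N) :
    ∃ N', M' ≤ N' ∧ Fires Fpt Ftp N w N' := by
  induction h generalizing N with
  | nil => exact ⟨N, hle, .nil N⟩
  | cons hen _ ih =>
    obtain ⟨N', hN'le, hN'⟩ := ih (fire_mono hle _)
    exact ⟨N', hN'le, .cons (hen.mono hle) hN'⟩

theorem EnabledSeq.mono {M N : P → ℕ} {w : List T} (h : EnabledSeq Fpt Ftp M w) (hle : M ≤ N) :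
    EnabledSeq Fpt Ftp N w :=
  let ⟨_, hM'⟩ := h
  let ⟨N', _, hN'⟩ := hM'.mono hle
  ⟨N', hN'⟩

end Monotonicity

theorem Ea_inter_Eb_diff_Eakb_convex_general {P T : Type}
    (Fpt : P → T → Prop) (Ftp : T → P → Prop)
    (a b : T) (k : ℕ) (M M' M'' : P → ℕ)
    (h1 : ∀ p, M p ≤ M' p) (h2 : ∀ p, M' p ≤ M'' p)
    (hM : Enabled Fpt M a ∧ Enabled Fpt M b ∧
      ¬ ∃ w : List T, w.length ≤ k ∧ EnabledSeq Fpt Ftp M (a :: (w ++ [b])))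
    (hM'' : Enabled Fpt M'' a ∧ Enabled Fpt M'' b ∧
      ¬ ∃ w : List T, w.length ≤ k ∧ EnabledSeq Fpt Ftp M'' (a :: (w ++ [b]))) :
    Enabled Fpt M' a ∧ Enabled Fpt M' b ∧
      ¬ ∃ w : List T, w.length ≤ k ∧ EnabledSeq Fpt Ftp M' (a :: (w ++ [b])) := by
  refine ⟨hM.1.mono h1, hM.2.1.mono h1, ?_⟩
  rintro ⟨w, hw, hseq⟩
  exact hM''.2.2 ⟨w, hw, hseq.mono h2⟩

/-- The set `E_a ∩ E_b ∩ (ℕ^P - E_{a(k)b})` is order-convex. -/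
theorem Ea_inter_Eb_diff_Eakb_convex {P T : Type} [Fintype P] [Fintype T]
    (Fpt : P → T → Prop) (Ftp : T → P → Prop) (M0 : P → ℕ)
    (a b : T) (hab : a ≠ b) (k : ℕ) (M M' M'' : P → ℕ)
    (h1 : ∀ p, M p ≤ M' p) (h2 : ∀ p, M' p ≤ M'' p)
    (hM : Enabled Fpt M a ∧ Enabled Fpt M b ∧
      ¬ ∃ w : List T, w.length ≤ k ∧ EnabledSeq Fpt Ftp M (a :: (w ++ [b])))
    (hM'' : Enabled Fpt M'' a ∧ Enabled Fpt M'' b ∧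
      ¬ ∃ w : List T, w.length ≤ k ∧ EnabledSeq Fpt Ftp M'' (a :: (w ++ [b]))) :
    Enabled Fpt M' a ∧ Enabled Fpt M' b ∧
      ¬ ∃ w : List T, w.length ≤ k ∧ EnabledSeq Fpt Ftp M' (a :: (w ++ [b])) :=
  Ea_inter_Eb_diff_Eakb_convex_general Fpt Ftp a b k M M' M'' h1 h2 hM hM''
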